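/- In an associative algebra, if $A$ commutes with $\mathrm{ad}_{e_1}^{n-1}e_0$ for all $n\geq 1$, then $\mathrm{ad}_{e_1}^{m-1}A$ commutes with $\mathrm{ad}_{e_1}^{n-1}e_0$ for all $m,n\geq 1$. -/
import Mathlib


/-- If `A` commutes with `ad_{e₁}^{n-1} e₀` for all `n ≥ 1`, then
`ad_{e₁}^{m-1} A` commutes with `ad_{e₁}^{n-1} e₀` for all `m, n ≥ 1`. -/
theorem stmt4 {R : Type*} [Ring R] (e₀ e₁ A : R)
    (hA : ∀ n : ℕ, 1 ≤ n →
      A * ((fun y => e₁ * y - y * e₁)^[n - 1] e₀) =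
        ((fun y => e₁ * y - y * e₁)^[n - 1] e₀) * A) :
    ∀ m n : ℕ, 1 ≤ m → 1 ≤ n →
      ((fun y => e₁ * y - y * e₁)^[m - 1] A) * ((fun y => e₁ * y - y * e₁)^[n - 1] e₀) =
        ((fun y => e₁ * y - y * e₁)^[n - 1] e₀) * ((fun y => e₁ * y - y * e₁)^[m - 1] A) := by
  set f : R → R := fun y => e₁ * y - y * e₁ with hf
  have key : ∀ k n : ℕ, 1 ≤ n → f^[k] A * f^[n-1] e₀ = f^[n-1] e₀ * f^[k] A := by
    intro k
    induction k with
    | zero => simpa using hA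
    | succ k ih =>
      intro n hn
      have h1 := ih n hn
      have h2 := ih (n+1) (by omega)
      have hC : f^[(n+1)-1] e₀ = f (f^[n-1] e₀) := by
        have h : (n+1)-1 = (n-1) + 1 := by omega
        rw [h, Function.iterate_succ_apply']
      rw [hC] at h2
      rw [Function.iterate_succ_apply']
      set B := f^[k] A
      set C := f^[n-1] e₀
      have h2' : B * (e₁ * C) - B * (C * e₁) = e₁ * C * B - C * e₁ * B := by
        simpa [hf, mul_sub, sub_mul] using h2
      have hb : B * (e₁ * C) = e₁ * (C * B) - C * (e₁ * B) + C * (B * e₁) := by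
        have h3 : B * (e₁ * C) = e₁ * C * B - C * e₁ * B + B * (C * e₁) := by
          rw [← h2']; abel
        rw [h3, mul_assoc e₁, mul_assoc C, ← mul_assoc B, h1, mul_assoc]
      show f B * C = C * f B
      simp only [hf, mul_sub, sub_mul]
      calc e₁ * B * C - B * e₁ * C
          = e₁ * (B * C) - B * (e₁ * C) := by rw [mul_assoc, mul_assoc]
        _ = e₁ * (C * B) - (e₁ * (C * B) - C * (e₁ * B) + C * (B * e₁)) := by rw [h1, hb]
        _ = C * (e₁ * B) - C * (B * e₁) := by abel
  intro m n _ hn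
  exact key (m-1) n hn
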